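/- For p ∈ {1, ∞} and any A ∈ ℝ^{n×n}, the infimum over all positive diagonal weights of the weighted ℓ_p logarithmic norm equals the spectral abscissa of the Metzler majorant: inf_{η ∈ ℝ^n_{>0}} μ_{p,[η]}(A) = α(⌈A⌉_Mzr), and this value is ≥ α(A). -/

import Mathlib

open Finset

/-- Spectral abscissa: supremum of real parts of (complex) eigenvalues. -/
noncomputable def specAbs {n : ℕ} (A : Matrix (Fin n) (Fin n) ℝ) : ℝ :=
  sSup {r : ℝ | ∃ μ : ℂ, μ ∈ spectrum ℂ (A.map (algebraMap ℝ ℂ)) ∧ r = μ.re}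

/-- Metzler majorant. -/
def mzr {n : ℕ} (A : Matrix (Fin n) (Fin n) ℝ) : Matrix (Fin n) (Fin n) ℝ :=
  fun i j => if i = j then A i j else |A i j|

/-- Weighted ℓ¹ logarithmic norm (explicit formula). -/
noncomputable def mu1 {n : ℕ} (η : Fin n → ℝ) (A : Matrix (Fin n) (Fin n) ℝ) : ℝ :=
  ⨆ i, (A i i + ∑ j ∈ univ.erase i, (η j / η i) * |A j i|)

/-- Weighted ℓ_∞ logarithmic norm (for the weight `[η]⁻¹`, explicit formula). -/
noncomputable def muInf {n : ℕ} (η : Fin n → ℝ) (A : Matrix (Fin n) (Fin n) ℝ) : ℝ :=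
  ⨆ i, (A i i + ∑ j ∈ univ.erase i, (η j / η i) * |A i j|)

/-!
Conjugating by `diag η` turns Gershgorin's theorem into `Re λ ≤ μ_{∞,[η]}(A)` for every
eigenvalue `λ`, and `μ_{∞,[η]}` only sees `⌈A⌉_Mzr`; so `α(⌈A⌉_Mzr)` and `α(A)` are lower bounds.
Conversely, for a Metzler `M` and `r > α(M)` the resolvent `(r - M)⁻¹` is entrywise nonnegative:
for large `r` this is a Neumann series of the nonnegative matrix `M + s` with `s ≫ 0`, and
nonnegativity at `r` propagates slightly to the left of `r` by another Neumann series, hence down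
to `α(M)` by continuous induction. Then `η = (r - M)⁻¹ 𝟙` is positive with `M η < r η`, that is,
`μ_{∞,[η]}(M) ≤ r`. The case `p = 1` is the case `p = ∞` for `Aᵀ`.
-/

open Filter Topology Matrix

namespace Matrix

section Gershgorin

variable {K ι : Type*} [NormedField K] [Fintype ι] [DecidableEq ι]

def diagonalUnit {d : ι → K} (hd : ∀ i, d i ≠ 0) : (Matrix ι ι K)ˣ where
  val := diagonal d
  inv := diagonal d⁻¹
  val_inv := by rw [diagonal_mul_diagonal]; simp [hd]
  inv_val := by rw [diagonal_mul_diagonal]; simp [hd]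

theorem exists_norm_sub_diag_le_of_mem_spectrum {A : Matrix ι ι K} {d : ι → K}
    (hd : ∀ i, d i ≠ 0) {μ : K} (hμ : μ ∈ spectrum K A) :
    ∃ k, ‖μ - A k k‖ ≤ ∑ j ∈ univ.erase k, ‖d j / d k‖ * ‖A k j‖ := by
  have hconj : ∀ i j, (diagonal d⁻¹ * A * diagonal d) i j = d j / d i * A i j := fun i j => by
    simp only [diagonal_mul, mul_diagonal, Pi.inv_apply]
    ring
  rw [← spectrum.units_conjugate' (u := diagonalUnit hd), ← spectrum_toLin',
    ← Module.End.hasEigenvalue_iff_mem_spectrum] at hμ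
  obtain ⟨k, hk⟩ := eigenvalue_mem_ball (A := diagonal d⁻¹ * A * diagonal d) hμ
  refine ⟨k, ?_⟩
  simpa only [mem_closedBall_iff_norm, hconj, div_self (hd k), one_mul, norm_mul] using hk

end Gershgorin

theorem spectrum_transpose {R ι : Type*} [CommRing R] [Fintype ι] [DecidableEq ι]
    (A : Matrix ι ι R) : spectrum R Aᵀ = spectrum R A := by
  ext μ
  rw [spectrum.mem_iff, spectrum.mem_iff, ← isUnit_transpose, transpose_sub,
    algebraMap_eq_diagonal, diagonal_transpose, transpose_transpose]

section Metzler

variable {ι : Type*}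

def IsNonneg (B : Matrix ι ι ℝ) : Prop := ∀ i j, 0 ≤ B i j

def IsMetzler (M : Matrix ι ι ℝ) : Prop := ∀ i j, i ≠ j → 0 ≤ M i j

theorem isClosed_setOf_isNonneg : IsClosed {B : Matrix ι ι ℝ | IsNonneg B} := by
  simp only [IsNonneg, Set.ofPred_forall]
  exact isClosed_iInter fun i => isClosed_iInter fun j =>
    isClosed_le continuous_const (continuous_id.matrix_elem i j)

theorem isNonneg_smul_one [DecidableEq ι] {c : ℝ} (hc : 0 ≤ c) :
    IsNonneg (c • 1 : Matrix ι ι ℝ) := by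
  intro i j
  rw [smul_apply, one_apply, smul_eq_mul]
  split_ifs <;> simp [hc]

variable [Fintype ι]

theorem IsNonneg.mul {A B : Matrix ι ι ℝ} (hA : IsNonneg A) (hB : IsNonneg B) :
    IsNonneg (A * B) :=
  fun i j => Finset.sum_nonneg fun k _ => mul_nonneg (hA i k) (hB k j)

variable [DecidableEq ι]

theorem IsMetzler.diag_mul_le_mulVec {M : Matrix ι ι ℝ} (hM : IsMetzler M) {η : ι → ℝ}
    (hη : ∀ j, 0 ≤ η j) (i : ι) : M i i * η i ≤ (M *ᵥ η) i := by
  rw [mulVec, dotProduct, ← Finset.add_sum_erase _ _ (Finset.mem_univ i)]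
  exact le_add_of_nonneg_right <| Finset.sum_nonneg fun j hj =>
    mul_nonneg (hM i j (Finset.ne_of_mem_erase hj).symm) (hη j)

theorem IsNonneg.pow {A : Matrix ι ι ℝ} (hA : IsNonneg A) (k : ℕ) : IsNonneg (A ^ k) := by
  induction k with
  | zero => intro i j; rw [pow_zero, one_apply]; split_ifs <;> norm_num
  | succ k ih => rw [pow_succ]; exact ih.mul hA

theorem IsMetzler.exists_isNonneg_smul_one_add {M : Matrix ι ι ℝ} (hM : IsMetzler M) :
    ∃ s : ℝ, IsNonneg (s • 1 + M) := by
  refine ⟨∑ i, |M i i|, fun i j => ?_⟩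
  rw [add_apply, smul_apply, one_apply, smul_eq_mul]
  split_ifs with h
  · subst h
    have := Finset.single_le_sum (f := fun i => |M i i|) (fun i _ => abs_nonneg _)
      (Finset.mem_univ i)
    linarith [neg_abs_le (M i i)]
  · simpa using hM i j h

section LinftyOpNorm

attribute [local instance] Matrix.linftyOpNormedRing Matrix.linftyOpNormedAlgebra

theorem IsNonneg.inv_one_sub {X : Matrix ι ι ℝ} (hX : IsNonneg X) (h : ‖X‖ < 1) :
    IsNonneg (1 - X)⁻¹ := by
  have hsum := summable_geometric_of_norm_lt_one h
  rw [inv_eq_left_inv (geom_series_mul_neg X h)]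
  intro i j
  exact (Pi.hasSum.1 (Pi.hasSum.1 hsum.hasSum i) j).nonneg fun k => hX.pow k i j

theorem isNonneg_inv_sub {A X : Matrix ι ι ℝ} (hA : IsUnit A.det) (hA' : IsNonneg A⁻¹)
    (hX : IsNonneg X) (h : ‖X * A⁻¹‖ < 1) : IsNonneg (A - X)⁻¹ := by
  have hfac : A - X = (1 - X * A⁻¹) * A := by
    rw [sub_mul, one_mul, mul_assoc, nonsing_inv_mul _ hA, mul_one]
  rw [hfac, mul_inv_rev]
  exact hA'.mul ((hX.mul hA').inv_one_sub h)

theorem IsMetzler.eventually_atTop_isNonneg_inv_smul_one_sub {M : Matrix ι ι ℝ} (hM : IsMetzler M) :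
    ∀ᶠ t : ℝ in atTop, IsNonneg (t • 1 - M)⁻¹ := by
  obtain ⟨s, hN⟩ := hM.exists_isNonneg_smul_one_add
  have hsmall : Tendsto (fun t : ℝ => (t + s)⁻¹ * ‖s • 1 + M‖) atTop (𝓝 0) := by
    simpa using (tendsto_inv_atTop_zero.comp
      (tendsto_atTop_add_const_right atTop s (tendsto_id (α := ℝ)))).mul_const ‖s • 1 + M‖
  filter_upwards [eventually_gt_atTop (-s), hsmall.eventually (gt_mem_nhds one_pos)]
    with t hts hlt
  have hpos : 0 < t + s := by linarith
  have hinv : ((t + s) • 1 : Matrix ι ι ℝ)⁻¹ = (t + s)⁻¹ • 1 := by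
    refine inv_eq_left_inv ?_
    rw [smul_mul_smul, one_mul, inv_mul_cancel₀ hpos.ne', one_smul]
  have hdet : IsUnit ((t + s) • 1 : Matrix ι ι ℝ).det := by
    rw [det_smul, det_one, mul_one]
    exact (pow_pos hpos _).ne'.isUnit
  have hshift : t • 1 - M = (t + s) • 1 - (s • 1 + M) := by
    rw [add_smul]; abel
  rw [hshift]
  refine isNonneg_inv_sub hdet (hinv ▸ isNonneg_smul_one (inv_nonneg.2 hpos.le)) hN ?_
  rwa [hinv, mul_smul_comm, mul_one, norm_smul, Real.norm_of_nonneg (inv_nonneg.2 hpos.le)]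

theorem eventually_nhdsLT_isNonneg_inv_smul_one_sub {M : Matrix ι ι ℝ} {r : ℝ}
    (hdet : IsUnit (r • 1 - M).det) (hR : IsNonneg (r • 1 - M)⁻¹) :
    ∀ᶠ t in 𝓝[<] r, IsNonneg (t • 1 - M)⁻¹ := by
  have hsmall : Tendsto (fun t : ℝ => ‖(r - t) • (1 : Matrix ι ι ℝ) * (r • 1 - M)⁻¹‖) (𝓝 r)
      (𝓝 0) := by
    have : Continuous fun t : ℝ => ‖(r - t) • (1 : Matrix ι ι ℝ) * (r • 1 - M)⁻¹‖ := by fun_prop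
    simpa using this.tendsto r
  filter_upwards [self_mem_nhdsWithin,
    nhdsWithin_le_nhds (hsmall.eventually (gt_mem_nhds one_pos))] with t (ht : t < r) hlt
  have hshift : t • 1 - M = (r • 1 - M) - (r - t) • 1 := by
    rw [sub_smul]; abel
  rw [hshift]
  exact isNonneg_inv_sub hdet hR (isNonneg_smul_one (sub_nonneg.2 ht.le)) hlt

end LinftyOpNorm

theorem continuousOn_inv_smul_one_sub {M : Matrix ι ι ℝ} {s : Set ℝ}
    (hs : ∀ t ∈ s, IsUnit (t • 1 - M).det) : ContinuousOn (fun t : ℝ => (t • 1 - M)⁻¹) s := by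
  intro t ht
  have hinv : ContinuousAt Ring.inverse (t • 1 - M).det := by
    rw [Ring.inverse_eq_inv']
    exact continuousAt_inv₀ (hs t ht).ne_zero
  exact ((continuousAt_matrix_inv _ hinv).comp (f := fun t : ℝ => t • 1 - M)
    (by fun_prop)).continuousWithinAt

theorem IsMetzler.isNonneg_inv_smul_one_sub {M : Matrix ι ι ℝ} (hM : IsMetzler M) {r : ℝ}
    (hr : ∀ t, r ≤ t → IsUnit (t • 1 - M).det) : IsNonneg (r • 1 - M)⁻¹ := by
  obtain ⟨T, hT, hrT⟩ := (hM.eventually_atTop_isNonneg_inv_smul_one_sub.and (eventually_ge_atTop r)).exists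
  have hclosed : IsClosed ({t : ℝ | IsNonneg (t • 1 - M)⁻¹} ∩ Set.Icc r T) := by
    rw [Set.inter_comm]
    exact (continuousOn_inv_smul_one_sub fun t ht => hr t ht.1).preimage_isClosed_of_isClosed
      isClosed_Icc isClosed_setOf_isNonneg
  refine hclosed.mem_of_ge_of_forall_exists_lt hT hrT fun x ⟨hx, hrx, _⟩ => ?_
  obtain ⟨t, ht, hrt, htx⟩ :=
    ((eventually_nhdsLT_isNonneg_inv_smul_one_sub (hr x hrx.le) hx).and (Ioo_mem_nhdsLT hrx)).exists
  exact ⟨t, ht, hrt.le, htx⟩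

theorem IsMetzler.exists_pos_mulVec_lt {M : Matrix ι ι ℝ} (hM : IsMetzler M) {r : ℝ}
    (hdet : IsUnit (r • 1 - M).det) (hR : IsNonneg (r • 1 - M)⁻¹) :
    ∃ η : ι → ℝ, (∀ i, 0 < η i) ∧ ∀ i, (M *ᵥ η) i < r * η i := by
  set η := (r • 1 - M)⁻¹ *ᵥ fun _ => (1 : ℝ)
  have hres : ∀ i, r * η i - (M *ᵥ η) i = 1 := fun i => by
    have h := congrFun (mulVec_mulVec (fun _ => (1 : ℝ)) (r • 1 - M) (r • 1 - M)⁻¹) i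
    rwa [mul_nonsing_inv _ hdet, one_mulVec, sub_mulVec, smul_mulVec, one_mulVec] at h
  have hη0 : ∀ i, 0 ≤ η i := fun i =>
    Finset.sum_nonneg fun j _ => mul_nonneg (hR i j) zero_le_one
  have hηpos : ∀ i, 0 < η i := fun i => by
    have h1 : 1 ≤ (r - M i i) * η i := by linarith [hres i, hM.diag_mul_le_mulVec hη0 i]
    refine (hη0 i).lt_of_ne fun h => ?_
    rw [← h, mul_zero] at h1
    linarith
  exact ⟨η, hηpos, fun i => by linarith [hres i]⟩

end Metzler

end Matrix

section SpectralAbscissa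

variable {n : ℕ}

theorem re_le_muInf {A : Matrix (Fin n) (Fin n) ℝ} {η : Fin n → ℝ} (hη : ∀ i, 0 < η i) {μ : ℂ}
    (hμ : μ ∈ spectrum ℂ (A.map (algebraMap ℝ ℂ))) : μ.re ≤ muInf η A := by
  obtain ⟨k, hk⟩ := exists_norm_sub_diag_le_of_mem_spectrum (d := fun i => (η i : ℂ))
    (fun i => Complex.ofReal_ne_zero.2 (hη i).ne') hμ
  have hrow : ‖μ - A k k‖ ≤ ∑ j ∈ univ.erase k, (η j / η k) * |A k j| := by
    have habs : ∀ i, |η i| = η i := fun i => abs_of_pos (hη i)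
    simpa only [norm_div, Complex.norm_real, Real.norm_eq_abs, habs, map_apply,
      Complex.coe_algebraMap] using hk
  calc μ.re = A k k + (μ - A k k).re := by simp
    _ ≤ A k k + ∑ j ∈ univ.erase k, (η j / η k) * |A k j| :=
      add_le_add_right ((Complex.re_le_norm _).trans hrow) _
    _ ≤ muInf η A :=
      le_ciSup (f := fun i => A i i + ∑ j ∈ univ.erase i, (η j / η i) * |A i j|)
        (Set.finite_range _).bddAbove k

theorem re_le_specAbs {A : Matrix (Fin n) (Fin n) ℝ} {μ : ℂ}
    (hμ : μ ∈ spectrum ℂ (A.map (algebraMap ℝ ℂ))) : μ.re ≤ specAbs A := by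
  refine le_csSup ⟨muInf 1 A, ?_⟩ ⟨μ, hμ, rfl⟩
  rintro _ ⟨ν, hν, rfl⟩
  exact re_le_muInf (fun _ => one_pos) hν

theorem specAbs_le_muInf [NeZero n] (A : Matrix (Fin n) (Fin n) ℝ) {η : Fin n → ℝ}
    (hη : ∀ i, 0 < η i) : specAbs A ≤ muInf η A := by
  obtain ⟨μ, hμ⟩ := Module.End.exists_eigenvalue (toLin' (A.map (algebraMap ℝ ℂ)))
  rw [Module.End.hasEigenvalue_iff_mem_spectrum, spectrum_toLin'] at hμ
  refine csSup_le ⟨μ.re, μ, hμ, rfl⟩ ?_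
  rintro _ ⟨ν, hν, rfl⟩
  exact re_le_muInf hη hν

theorem isUnit_det_smul_one_sub_of_specAbs_lt {M : Matrix (Fin n) (Fin n) ℝ} {t : ℝ}
    (ht : specAbs M < t) : IsUnit (t • 1 - M).det := by
  by_contra hdet
  have hmem : (t : ℂ) ∈ spectrum ℂ (M.map (algebraMap ℝ ℂ)) := by
    rw [spectrum.mem_iff, isUnit_iff_isUnit_det]
    have hmap : algebraMap ℂ (Matrix (Fin n) (Fin n) ℂ) t - M.map (algebraMap ℝ ℂ)
        = (algebraMap ℝ ℂ).mapMatrix (t • 1 - M) := by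
      ext i j
      by_cases h : i = j <;> simp [algebraMap_matrix_apply, one_apply, h]
    rwa [hmap, ← RingHom.map_det, isUnit_map_iff]
  exact (re_le_specAbs hmem).not_gt (by simpa using ht)

theorem specAbs_transpose (A : Matrix (Fin n) (Fin n) ℝ) : specAbs Aᵀ = specAbs A := by
  rw [specAbs, specAbs, transpose_map, spectrum_transpose]

end SpectralAbscissa

section MetzlerMajorant

variable {n : ℕ}

theorem Matrix.IsMetzler.muInf_le_of_mulVec_le [NeZero n] {M : Matrix (Fin n) (Fin n) ℝ}
    (hM : IsMetzler M) {η : Fin n → ℝ} (hη : ∀ i, 0 < η i) {r : ℝ}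
    (h : ∀ i, (M *ᵥ η) i ≤ r * η i) : muInf η M ≤ r := by
  refine ciSup_le fun i => le_of_mul_le_mul_left ?_ (hη i)
  have hrow : η i * (M i i + ∑ j ∈ univ.erase i, (η j / η i) * |M i j|) = (M *ᵥ η) i := by
    rw [mulVec, dotProduct, ← Finset.add_sum_erase _ _ (Finset.mem_univ i), mul_add,
      Finset.mul_sum]
    congr 1
    · ring
    · refine Finset.sum_congr rfl fun j hj => ?_
      rw [abs_of_nonneg (hM i j (Finset.ne_of_mem_erase hj).symm)]
      field_simp [(hη i).ne']
  rw [hrow, mul_comm]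
  exact h i

theorem Matrix.IsMetzler.exists_muInf_le [NeZero n] {M : Matrix (Fin n) (Fin n) ℝ}
    (hM : IsMetzler M) {r : ℝ} (hr : specAbs M < r) :
    ∃ η : Fin n → ℝ, (∀ i, 0 < η i) ∧ muInf η M ≤ r := by
  have hdet : ∀ t, r ≤ t → IsUnit (t • 1 - M).det := fun t ht =>
    isUnit_det_smul_one_sub_of_specAbs_lt (hr.trans_le ht)
  obtain ⟨η, hη, hlt⟩ := hM.exists_pos_mulVec_lt (hdet r le_rfl) (hM.isNonneg_inv_smul_one_sub hdet)
  exact ⟨η, hη, hM.muInf_le_of_mulVec_le hη fun i => (hlt i).le⟩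

theorem isMetzler_mzr (A : Matrix (Fin n) (Fin n) ℝ) : IsMetzler (mzr A) := fun i j h => by
  simp only [mzr, if_neg h, abs_nonneg]

theorem muInf_mzr (η : Fin n → ℝ) (A : Matrix (Fin n) (Fin n) ℝ) :
    muInf η (mzr A) = muInf η A := by
  unfold muInf
  congr 1; funext i
  congr 1
  · simp [mzr]
  · refine Finset.sum_congr rfl fun j hj => ?_
    simp [mzr, (Finset.ne_of_mem_erase hj).symm]

theorem mzr_transpose (A : Matrix (Fin n) (Fin n) ℝ) : mzr Aᵀ = (mzr A)ᵀ := by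
  ext i j
  by_cases h : i = j
  · subst h; simp [mzr]
  · simp [mzr, h, Ne.symm h]

theorem mu1_eq_muInf_transpose (η : Fin n → ℝ) (A : Matrix (Fin n) (Fin n) ℝ) :
    mu1 η A = muInf η Aᵀ :=
  rfl

theorem isGLB_muInf [NeZero n] (A : Matrix (Fin n) (Fin n) ℝ) :
    IsGLB {r : ℝ | ∃ η : Fin n → ℝ, (∀ i, 0 < η i) ∧ r = muInf η A} (specAbs (mzr A)) := by
  refine ⟨?_, fun b hb => le_of_forall_gt_imp_ge_of_dense fun r hr => ?_⟩
  · rintro _ ⟨η, hη, rfl⟩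
    rw [← muInf_mzr]
    exact specAbs_le_muInf _ hη
  · obtain ⟨η, hη, hle⟩ := (isMetzler_mzr A).exists_muInf_le hr
    rw [muInf_mzr] at hle
    exact (hb ⟨η, hη, rfl⟩).trans hle

end MetzlerMajorant

/-- For `p ∈ {1,∞}`, the infimum over positive diagonal weights of the weighted
ℓ_p logarithmic norm equals `α(⌈A⌉_Mzr)`, which is at least `α(A)`. -/
theorem inf_mu_eq_specAbs_mzr {n : ℕ} (hn : 0 < n) (A : Matrix (Fin n) (Fin n) ℝ) :
    IsGLB {r : ℝ | ∃ η : Fin n → ℝ, (∀ i, 0 < η i) ∧ r = mu1 η A} (specAbs (mzr A)) ∧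
    IsGLB {r : ℝ | ∃ η : Fin n → ℝ, (∀ i, 0 < η i) ∧ r = muInf η A} (specAbs (mzr A)) ∧
    specAbs A ≤ specAbs (mzr A) := by
  have : NeZero n := NeZero.of_pos hn
  refine ⟨?_, isGLB_muInf A, (isGLB_muInf A).2 ?_⟩
  · simp only [mu1_eq_muInf_transpose]
    rw [← specAbs_transpose (mzr A), ← mzr_transpose]
    exact isGLB_muInf Aᵀ
  · rintro _ ⟨η, hη, rfl⟩
    exact specAbs_le_muInf A hη
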